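/- arXiv:2212.04942 — 2 statements merged into one kernel-verified Lean document; each statement's English description precedes it below -/
import Mathlib

section
/- Fix a dimension d ≥ 1. For each i ∈ {1,...,d} let n⁽ⁱ⁾ ≥ 1, N⁽ⁱ⁾ = 2^{n⁽ⁱ⁾}, and mesh points x_k⁽ⁱ⁾ = k⁽ⁱ⁾/N⁽ⁱ⁾ for k⁽ⁱ⁾ ∈ {0,...,N⁽ⁱ⁾−1}. For each i let K⁽ⁱ⁾ ≥ 1 and let A_0⁽ⁱ⁾,...,A_{K⁽ⁱ⁾−1}⁽ⁱ⁾ be pairwise disjoint subsets of [0,1) covering [0,1); let S(k⁽ⁱ⁾) ∈ {0,...,K⁽ⁱ⁾−1} be the unique index with x_k⁽ⁱ⁾ ∈ A⁽ⁱ⁾_{S(k⁽ⁱ⁾)}, and set m⁽ⁱ⁾ = ⌈log₂ K⁽ⁱ⁾⌉, M⁽ⁱ⁾ = 2^{m⁽ⁱ⁾}. For a multi-index s = (s⁽¹⁾,...,s⁽ᵈ⁾) with s⁽ⁱ⁾ ∈ {0,...,K⁽ⁱ⁾−1}, let f_s : [0,1)^d → ℝ and define f(x) = Σ_s f_s(x)·Π_i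 1_{A⁽ⁱ⁾_{s⁽ⁱ⁾}}(x⁽ⁱ⁾). For a multi-index t = (t⁽¹⁾,...,t⁽ᵈ⁾) with t⁽ⁱ⁾ ∈ {0,...,M⁽ⁱ⁾−1}, define g_t(x) = (Π_{i=1}^d M⁽ⁱ⁾)^{−1} Σ_s (−1)^{Σ_{i=1}^d s⁽ⁱ⁾·t⁽ⁱ⁾} f_s(x). Then for every multi-index k: f(x_k) = Σ_t g_t(x_k) · Π_{i=1}^d Π_{a=1}^{m⁽ⁱ⁾} (−1)^{S_a(k⁽ⁱ⁾)·t⁽ⁱ⁾_a}. -/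
/-- The value (0 or 1) of the `a`-th bit of the natural number `u`. -/
def bitVal (u a : ℕ) : ℕ := if Nat.testBit u a then 1 else 0

/-- The bitwise dot product `s·t = Σ_{a<m} s_a t_a` of the `m`-bit integers `s` and `t`. -/
def bdot (m s t : ℕ) : ℕ := ∑ a ∈ Finset.range m, bitVal s a * bitVal t a

lemma bdot_of_lt {m t : ℕ} (u : ℕ) (ht : t < 2 ^ m) :
    bdot (m + 1) u t = bdot m u t := by
  rw [bdot, Finset.sum_range_succ, bdot]
  have : Nat.testBit t m = false := Nat.testBit_lt_two_pow ht
  simp [bitVal, this]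

lemma bdot_two_pow_add {m t : ℕ} (u : ℕ) (ht : t < 2 ^ m) :
    bdot (m + 1) u (2 ^ m + t) = bdot m u t + bitVal u m := by
  rw [bdot, Finset.sum_range_succ, bdot]
  have h1 : Nat.testBit (2 ^ m + t) m = true := by
    rw [Nat.testBit_two_pow_add_eq, Nat.testBit_lt_two_pow ht]; rfl
  have h2 : ∀ a ∈ Finset.range m, bitVal u a * bitVal (2 ^ m + t) a = bitVal u a * bitVal t a := by
    intro a ha
    rw [Finset.mem_range] at ha
    simp only [bitVal, Nat.testBit_two_pow_add_gt ha]
  rw [Finset.sum_congr rfl h2, bitVal, bitVal, h1]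
  simp [mul_comm]

lemma orth (m : ℕ) : ∀ u < 2 ^ m,
    ∑ t ∈ Finset.range (2 ^ m), (-1 : ℝ) ^ bdot m u t
      = if u = 0 then (2 ^ m : ℝ) else 0 := by
  induction m with
  | zero =>
    intro u hu
    interval_cases u
    simp [bdot]
  | succ m ih =>
    intro u hu
    have hsplit : ∑ t ∈ Finset.range (2 ^ (m + 1)), (-1 : ℝ) ^ bdot (m + 1) u t
        = ∑ t ∈ Finset.range (2 ^ m), (-1 : ℝ) ^ bdot (m + 1) u t
          + ∑ t ∈ Finset.range (2 ^ m), (-1 : ℝ) ^ bdot (m + 1) u (2 ^ m + t) := by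
      have h2 : 2 ^ (m + 1) = 2 ^ m + 2 ^ m := by ring
      rw [h2, Finset.sum_range_add]
    rw [hsplit]
    have e1 : ∀ t ∈ Finset.range (2 ^ m),
        (-1 : ℝ) ^ bdot (m + 1) u t = (-1 : ℝ) ^ bdot m u t := by
      intro t ht; rw [Finset.mem_range] at ht; rw [bdot_of_lt u ht]
    have e2 : ∀ t ∈ Finset.range (2 ^ m),
        (-1 : ℝ) ^ bdot (m + 1) u (2 ^ m + t)
          = (-1 : ℝ) ^ bitVal u m * (-1 : ℝ) ^ bdot m u t := by
      intro t ht; rw [Finset.mem_range] at ht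
      rw [bdot_two_pow_add u ht, pow_add, mul_comm]
    rw [Finset.sum_congr rfl e1, Finset.sum_congr rfl e2, ← Finset.mul_sum]
    by_cases hb : Nat.testBit u m
    · have hu0 : u ≠ 0 := by
        intro h; rw [h] at hb; simp [Nat.zero_testBit] at hb
      simp [bitVal, hb, hu0]
    · have hum : u < 2 ^ m := by
        by_contra h
        push_neg at h
        have hp : 0 < 2 ^ m := Nat.two_pow_pos m
        have h1 : 1 ≤ u / 2 ^ m := (Nat.le_div_iff_mul_le hp).mpr (by omega)
        have h2 : u / 2 ^ m < 2 := (Nat.div_lt_iff_lt_mul hp).mpr (by rw [pow_succ] at hu; omega)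
        have : u / 2 ^ m = 1 := by omega
        rw [Nat.testBit_eq_decide_div_mod_eq, this] at hb
        simp at hb
      rw [ih u hum]
      simp [bitVal, hb]
      by_cases h0 : u = 0 <;> simp [h0] <;> ring

lemma neg_one_pow_bdot_add (m s s' t : ℕ) :
    (-1 : ℝ) ^ (bdot m s t + bdot m s' t) = (-1 : ℝ) ^ bdot m (s ^^^ s') t := by
  rw [bdot, bdot, bdot, ← Finset.sum_add_distrib,
    ← Finset.prod_pow_eq_pow_sum, ← Finset.prod_pow_eq_pow_sum]
  apply Finset.prod_congr rfl
  intro a _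
  simp only [bitVal, Nat.testBit_xor]
  cases hs : Nat.testBit s a <;> cases hs' : Nat.testBit s' a <;>
    cases ht : Nat.testBit t a <;> norm_num

lemma orth2 {m s s' : ℕ} (hs : s < 2 ^ m) (hs' : s' < 2 ^ m) :
    ∑ t ∈ Finset.range (2 ^ m), (-1 : ℝ) ^ bdot m s t * (-1 : ℝ) ^ bdot m s' t
      = if s = s' then (2 ^ m : ℝ) else 0 := by
  have h : ∀ t, (-1 : ℝ) ^ bdot m s t * (-1 : ℝ) ^ bdot m s' t
      = (-1 : ℝ) ^ bdot m (s ^^^ s') t := by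
    intro t; rw [← pow_add, neg_one_pow_bdot_add]
  simp only [h]
  rw [orth m (s ^^^ s') (Nat.xor_lt_two_pow hs hs')]
  simp [xor_eq_zero_iff]

/-- **Corollary 2 of the paper.** The `d`-dimensional generalization of
Lemma 1: for a multivariate piecewise function `f = Σ_s f_s · Π_i 1_{A⁽ⁱ⁾_{s⁽ⁱ⁾}}`
defined on Cartesian products of subdomains `A⁽ⁱ⁾_0, …, A⁽ⁱ⁾_{K⁽ⁱ⁾−1}` of `[0,1)`, with
labeling functions `S(k⁽ⁱ⁾)`, `m⁽ⁱ⁾ = ⌈log₂ K⁽ⁱ⁾⌉`, `M⁽ⁱ⁾ = 2^{m⁽ⁱ⁾}` and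
`g_t(x) = (Π_i M⁽ⁱ⁾)⁻¹ Σ_s (−1)^{Σ_i s⁽ⁱ⁾·t⁽ⁱ⁾} f_s(x)`, one has, for every multi-index
`k`, `f(x_k) = Σ_t g_t(x_k) Π_i Π_a (−1)^{S_a(k⁽ⁱ⁾)·t⁽ⁱ⁾_a}`. -/
theorem piecewise_walsh_representation_multidim
    (d : ℕ) (hd : 1 ≤ d)
    (n : Fin d → ℕ) (hn : ∀ i, 1 ≤ n i)
    (K : Fin d → ℕ) (hK : ∀ i, 1 ≤ K i)
    (A : ∀ i : Fin d, Fin (K i) → Set ℝ)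
    (hdisj : ∀ i : Fin d, Pairwise fun s s' => Disjoint (A i s) (A i s'))
    (hcover : ∀ i : Fin d, (⋃ s, A i s) = Set.Ico (0 : ℝ) 1)
    (S : ∀ i : Fin d, ℕ → Fin (K i))
    (hS : ∀ i : Fin d, ∀ k : ℕ, k < 2 ^ n i → ((k : ℝ) / 2 ^ n i) ∈ A i (S i k))
    (m : Fin d → ℕ) (hm : ∀ i, m i = Nat.clog 2 (K i))
    (fs : (∀ i : Fin d, Fin (K i)) → (Fin d → ℝ) → ℝ)
    (f : (Fin d → ℝ) → ℝ)
    (hf : ∀ x : Fin d → ℝ,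
      f x = ∑ s : ∀ i : Fin d, Fin (K i),
        fs s x * ∏ i : Fin d, (A i (s i)).indicator (fun _ => (1 : ℝ)) (x i))
    (g : (∀ _ : Fin d, ℕ) → (Fin d → ℝ) → ℝ)
    (hg : ∀ t : Fin d → ℕ, ∀ x : Fin d → ℝ,
      g t x = (∏ i : Fin d, (2 ^ m i : ℝ))⁻¹ *
        ∑ s : ∀ i : Fin d, Fin (K i),
          (-1 : ℝ) ^ (∑ i : Fin d, bdot (m i) (s i : ℕ) (t i)) * fs s x) :
    ∀ k : Fin d → ℕ, (∀ i, k i < 2 ^ n i) →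
      f (fun i => (k i : ℝ) / 2 ^ n i) =
        ∑ t : ∀ i : Fin d, Fin (2 ^ m i),
          g (fun i => (t i : ℕ)) (fun i => (k i : ℝ) / 2 ^ n i) *
            ∏ i : Fin d, ∏ a ∈ Finset.range (m i),
              (-1 : ℝ) ^ (bitVal (S i (k i) : ℕ) a * bitVal (t i : ℕ) a) := by
  intro k hk
  set x : Fin d → ℝ := fun i => (k i : ℝ) / 2 ^ n i with hx
  have hMK : ∀ i, K i ≤ 2 ^ m i := by
    intro i; rw [hm i]; exact Nat.le_pow_clog one_lt_two _
  have hCne : (∏ i : Fin d, (2 ^ m i : ℝ)) ≠ 0 := by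
    apply Finset.prod_ne_zero_iff.mpr
    intro i _
    positivity
  -- indicator computation
  have hind : ∀ (i : Fin d) (s : Fin (K i)),
      (A i s).indicator (fun _ => (1 : ℝ)) (x i)
        = if s = S i (k i) then 1 else 0 := by
    intro i s
    have hmem : x i ∈ A i (S i (k i)) := hS i (k i) (hk i)
    by_cases h : s = S i (k i)
    · subst h
      simp [Set.indicator_of_mem hmem]
    · rw [if_neg h, Set.indicator_of_notMem]
      intro hx'
      exact (Set.disjoint_left.mp (hdisj i h)) hx' hmem
  -- orthogonality per coordinate
  have key : ∀ (i : Fin d) (s : Fin (K i)),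
      ∑ t : Fin (2 ^ m i),
          (-1 : ℝ) ^ bdot (m i) (s : ℕ) (t : ℕ) * (-1 : ℝ) ^ bdot (m i) (S i (k i) : ℕ) (t : ℕ)
        = if s = S i (k i) then (2 ^ m i : ℝ) else 0 := by
    intro i s
    rw [Fin.sum_univ_eq_sum_range
      (fun t => (-1 : ℝ) ^ bdot (m i) (s : ℕ) t * (-1 : ℝ) ^ bdot (m i) (S i (k i) : ℕ) t)]
    rw [orth2 (lt_of_lt_of_le s.isLt (hMK i)) (lt_of_lt_of_le (S i (k i)).isLt (hMK i))]
    simp [Fin.val_eq_val]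
  calc f x
      = ∑ s : ∀ i : Fin d, Fin (K i), fs s x *
          ∏ i : Fin d, (if s i = S i (k i) then (1 : ℝ) else 0) := by
        rw [hf]
        exact Finset.sum_congr rfl fun s _ => by
          rw [Finset.prod_congr rfl fun i _ => hind i (s i)]
    _ = ∑ s : ∀ i : Fin d, Fin (K i),
          (∏ i : Fin d, (2 ^ m i : ℝ))⁻¹ * (fs s x *
            ∏ i : Fin d, (if s i = S i (k i) then ((2 : ℝ) ^ m i) else 0)) := by
        apply Finset.sum_congr rfl
        intro s _
        have : ∏ i : Fin d, (if s i = S i (k i) then ((2 : ℝ) ^ m i) else 0)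
            = (∏ i : Fin d, (2 ^ m i : ℝ)) *
              ∏ i : Fin d, (if s i = S i (k i) then (1 : ℝ) else 0) := by
          rw [← Finset.prod_mul_distrib]
          apply Finset.prod_congr rfl
          intro i _
          by_cases h : s i = S i (k i) <;> simp [h]
        rw [this]
        field_simp
    _ = ∑ s : ∀ i : Fin d, Fin (K i),
          (∏ i : Fin d, (2 ^ m i : ℝ))⁻¹ * (fs s x *
            ∏ i : Fin d, ∑ t : Fin (2 ^ m i),
              (-1 : ℝ) ^ bdot (m i) (s i : ℕ) (t : ℕ) *
                (-1 : ℝ) ^ bdot (m i) (S i (k i) : ℕ) (t : ℕ)) := by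
        apply Finset.sum_congr rfl
        intro s _
        rw [Finset.prod_congr rfl fun i _ => (key i (s i)).symm]
    _ = ∑ s : ∀ i : Fin d, Fin (K i),
          (∏ i : Fin d, (2 ^ m i : ℝ))⁻¹ * (fs s x *
            ∑ t : ∀ i : Fin d, Fin (2 ^ m i), ∏ i : Fin d,
              ((-1 : ℝ) ^ bdot (m i) (s i : ℕ) (t i : ℕ) *
                (-1 : ℝ) ^ bdot (m i) (S i (k i) : ℕ) (t i : ℕ))) := by
        apply Finset.sum_congr rfl
        intro s _
        congr 1
        congr 1
        rw [show (∏ i : Fin d, ∑ t : Fin (2 ^ m i),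
              (-1 : ℝ) ^ bdot (m i) (s i : ℕ) (t : ℕ) *
                (-1 : ℝ) ^ bdot (m i) (S i (k i) : ℕ) (t : ℕ))
            = ∑ t ∈ Fintype.piFinset (fun i : Fin d => (Finset.univ : Finset (Fin (2 ^ m i)))),
              ∏ i : Fin d,
                ((-1 : ℝ) ^ bdot (m i) (s i : ℕ) (t i : ℕ) *
                  (-1 : ℝ) ^ bdot (m i) (S i (k i) : ℕ) (t i : ℕ))
          from Finset.prod_univ_sum _ _]
        rw [Fintype.piFinset_univ]
    _ = ∑ t : ∀ i : Fin d, Fin (2 ^ m i),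
          g (fun i => (t i : ℕ)) x *
            ∏ i : Fin d, ∏ a ∈ Finset.range (m i),
              (-1 : ℝ) ^ (bitVal (S i (k i) : ℕ) a * bitVal (t i : ℕ) a) := by
        simp only [hg, Finset.mul_sum, Finset.sum_mul]
        rw [Finset.sum_comm]
        apply Finset.sum_congr rfl
        intro t _
        apply Finset.sum_congr rfl
        intro s _
        have h1 : ∏ i : Fin d, ∏ a ∈ Finset.range (m i),
              (-1 : ℝ) ^ (bitVal (S i (k i) : ℕ) a * bitVal (t i : ℕ) a)
            = ∏ i : Fin d, (-1 : ℝ) ^ bdot (m i) (S i (k i) : ℕ) (t i : ℕ) := by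
          apply Finset.prod_congr rfl
          intro i _
          rw [Finset.prod_pow_eq_pow_sum, bdot]
        have h2 : (-1 : ℝ) ^ (∑ i : Fin d, bdot (m i) (s i : ℕ) (t i : ℕ))
            = ∏ i : Fin d, (-1 : ℝ) ^ bdot (m i) (s i : ℕ) (t i : ℕ) := by
          rw [Finset.prod_pow_eq_pow_sum]
        rw [h1, h2, Finset.prod_mul_distrib]
        ring
end

section
/- Let n, m be integers with n ≥ m ≥ 1 and set l = m. Define G^{a-a} = [2^{m−1}n(n−1) + 2^m n + 2^m + 2^l − 2] + [2^m n(n−1) + 2(2^m−1)n + 2^m + 2^{l+1} − 6] + 2^{l+1}m + 4(2^l−1)m, and G^{a-f} = [2^{m−1}(n−m)(n−m−1) + 2^m(n−m) + 2^m − 1] + [2^m(n−m)(n−m−1) + 2(2^m−1)(n−m) + 2^m − 2]. Then G^{a-a} > G^{a-f}. -/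
/-- For integers `n ≥ m ≥ 1` and `l = m`, the total gate count
`G^{a-a}` of the ancilla-assisted implementation of a uniform piecewise quadratic
function strictly exceeds the total gate count `G^{a-f}` of the ancilla-free
implementation. -/
theorem uniform_ancilla_free_always_better (n m l : ℕ) (hm : 1 ≤ m) (hmn : m ≤ n)
    (hl : l = m)
    (Gaa Gaf : ℤ)
    (hGaa : Gaa =
      ((2 : ℤ) ^ (m - 1) * n * ((n : ℤ) - 1) + 2 ^ m * n + 2 ^ m + 2 ^ l - 2) +
        ((2 : ℤ) ^ m * n * ((n : ℤ) - 1) + 2 * (2 ^ m - 1) * n + 2 ^ m + 2 ^ (l + 1) - 6) +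
        2 ^ (l + 1) * m + 4 * (2 ^ l - 1) * m)
    (hGaf : Gaf =
      ((2 : ℤ) ^ (m - 1) * ((n : ℤ) - m) * ((n : ℤ) - m - 1) +
          2 ^ m * ((n : ℤ) - m) + 2 ^ m - 1) +
        ((2 : ℤ) ^ m * ((n : ℤ) - m) * ((n : ℤ) - m - 1) +
          2 * (2 ^ m - 1) * ((n : ℤ) - m) + 2 ^ m - 2)) :
    Gaf < Gaa := by
  subst hGaa hGaf
  rw [hl]
  have hmm : m - 1 + 1 = m := Nat.succ_pred_eq_of_pos hm
  have h2 : (2 : ℤ) ^ m = 2 * 2 ^ (m - 1) := by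
    conv_lhs => rw [← hmm]
    rw [pow_succ]; ring
  have ha : (1 : ℤ) ≤ 2 ^ (m - 1) := one_le_pow₀ one_le_two
  have hM : (1 : ℤ) ≤ (m : ℤ) := by exact_mod_cast hm
  have hN : (m : ℤ) ≤ (n : ℤ) := by exact_mod_cast hmn
  rw [h2, pow_succ, h2]
  nlinarith [mul_nonneg (mul_nonneg (sub_nonneg.2 ha) (sub_nonneg.2 hM)) (sub_nonneg.2 hN),
    mul_nonneg (sub_nonneg.2 ha) (sub_nonneg.2 hM),
    mul_nonneg (mul_nonneg (zero_le_one.trans ha) (zero_le_one.trans hM)) (sub_nonneg.2 hN),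
    mul_nonneg (mul_nonneg (zero_le_one.trans ha) (sub_nonneg.2 hN)) (sub_nonneg.2 hN),
    mul_nonneg (mul_nonneg (zero_le_one.trans ha) (zero_le_one.trans hM)) (zero_le_one.trans hM),
    mul_nonneg (mul_nonneg (zero_le_one.trans ha) (zero_le_one.trans hM)) (sub_nonneg.2 (hM.trans hN)),
    ha, hM, hN]
end
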